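/- arXiv:1604.02441 — 3 statements merged into one kernel-verified Lean document; each statement's English description precedes it below -/
import Mathlib

section
/- Let I be a weighted-homogeneous ideal of k_a[x_0,...,x_n] over an algebraically closed field. Then V(I) = ∅ in ℙ(a_0,...,a_n) if and only if the irrelevant ideal (x_0,...,x_n) is contained in the radical of I. -/
/-!
Weighted-homogeneous generators vanish at a point iff they vanish at every weighted rescaling of
it, so a point of `ℙ(a)` lies in `V(I)` exactly when its representatives lie in the affine zero
locus of `I`. Hence `V(I) = ∅` iff the affine zero locus is contained in the origin, which by the
Nullstellensatz means that every `X i` lies in the radical of `I`.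
-/

open MvPolynomial

/-- The scaling equivalence on `𝔸^{n+1} ∖ {0}` defining weighted projective space:
`y ~ x` iff `y i = λ ^ (a i) * x i` for some unit `λ`. -/
def wpsRel {k : Type*} [Field k] {n : ℕ} (a : Fin (n + 1) → ℕ)
    (x y : {v : Fin (n + 1) → k // v ≠ 0}) : Prop :=
  ∃ l : kˣ, ∀ i, y.1 i = (l : k) ^ a i * x.1 i

/-- Weighted projective space `ℙ(a_0, …, a_n)` as the quotient of
`𝔸^{n+1} ∖ {0}` by the weighted scaling action. -/
def WPS (k : Type*) [Field k] {n : ℕ} (a : Fin (n + 1) → ℕ) :=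
  Quot (wpsRel (k := k) a)

/-- The vanishing locus in weighted projective space of an ideal. -/
def zeroLocus {k : Type*} [Field k] {n : ℕ} (a : Fin (n + 1) → ℕ)
    (I : Ideal (MvPolynomial (Fin (n + 1)) k)) : Set (WPS k a) :=
  {p | ∀ x : {v : Fin (n + 1) → k // v ≠ 0},
    Quot.mk (wpsRel a) x = p → ∀ f ∈ I, eval x.1 f = 0}

/-- An ideal of the weighted polynomial ring is weighted-homogeneous if it can be
generated by weighted-homogeneous polynomials. -/
def IsWeightedHomogeneousIdeal {k : Type*} [Field k] {n : ℕ} (a : Fin (n + 1) → ℕ)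
    (I : Ideal (MvPolynomial (Fin (n + 1)) k)) : Prop :=
  ∃ S : Set (MvPolynomial (Fin (n + 1)) k),
    (∀ g ∈ S, ∃ d : ℕ, g.IsWeightedHomogeneous a d) ∧ I = Ideal.span S

theorem MvPolynomial.IsWeightedHomogeneous.eval_pow_mul {R σ : Type*} [CommSemiring R]
    {w : σ → ℕ} {φ : MvPolynomial σ R} {d : ℕ} (hφ : φ.IsWeightedHomogeneous w d)
    (c : R) (x : σ → R) :
    eval (fun i => c ^ w i * x i) φ = c ^ d * eval x φ := by
  simp only [eval_eq, Finset.mul_sum]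
  refine Finset.sum_congr rfl fun m hm => ?_
  have hd : ∑ i ∈ m.support, w i * m i = d := by
    simp only [← hφ (mem_support_iff.mp hm), Finsupp.weight_apply, Finsupp.sum, smul_eq_mul,
      mul_comm]
  simp only [← hd, ← Finset.prod_pow_eq_pow_sum, pow_mul, mul_pow, Finset.prod_mul_distrib]
  ring

theorem MvPolynomial.zeroLocus_span_range_X {k K σ : Type*} [Field k] [Field K] [Algebra k K] :
    MvPolynomial.zeroLocus K (Ideal.span (Set.range (X : σ → MvPolynomial σ k))) = {0} := by
  ext x
  simp only [zeroLocus_span, Set.mem_ofPred_eq, Set.forall_mem_range, aeval_X,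
    Set.mem_singleton_iff]
  exact _root_.funext_iff.symm

theorem MvPolynomial.span_range_X_le_radical_iff {k σ : Type*} [Field k] [IsAlgClosed k]
    [Finite σ] (I : Ideal (MvPolynomial σ k)) :
    Ideal.span (Set.range X) ≤ I.radical ↔ MvPolynomial.zeroLocus k I ⊆ {0} := by
  rw [← vanishingIdeal_zeroLocus_eq_radical (K := k), ← le_zeroLocus_iff_le_vanishingIdeal,
    zeroLocus_span_range_X]

section WeightedProjectiveSpace

variable {k : Type*} [Field k] {n : ℕ} {a : Fin (n + 1) → ℕ}

variable (a) in
theorem wpsRel_equivalence : Equivalence (wpsRel (k := k) a) where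
  refl _ := ⟨1, fun _ => by simp⟩
  symm := by
    rintro _ _ ⟨l, hl⟩
    exact ⟨l⁻¹, fun i => by rw [hl i, ← mul_assoc, ← mul_pow]; simp⟩
  trans := by
    rintro _ _ _ ⟨l, hl⟩ ⟨m, hm⟩
    exact ⟨m * l, fun i => by rw [hm i, hl i, Units.val_mul, mul_pow, mul_assoc]⟩

theorem wpsRel_of_mk_eq_mk {x y : {v : Fin (n + 1) → k // v ≠ 0}}
    (h : Quot.mk (wpsRel a) x = Quot.mk (wpsRel a) y) : wpsRel a x y :=
  (wpsRel_equivalence a).eqvGen_iff.mp (Quot.eqvGen_exact h)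

namespace IsWeightedHomogeneousIdeal

variable {I : Ideal (MvPolynomial (Fin (n + 1)) k)}

theorem pow_mul_mem_zeroLocus (hI : IsWeightedHomogeneousIdeal a I) {x : Fin (n + 1) → k}
    (hx : x ∈ MvPolynomial.zeroLocus k I) (c : k) :
    (fun i => c ^ a i * x i) ∈ MvPolynomial.zeroLocus k I := by
  obtain ⟨S, hS, rfl⟩ := hI
  rw [zeroLocus_span] at hx ⊢
  intro g hg
  obtain ⟨d, hgd⟩ := hS g hg
  simp only [aeval_eq_eval] at hx ⊢
  rw [hgd.eval_pow_mul, hx g hg, mul_zero]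

theorem mk_mem_zeroLocus_iff (hI : IsWeightedHomogeneousIdeal a I)
    (x : {v : Fin (n + 1) → k // v ≠ 0}) :
    Quot.mk (wpsRel a) x ∈ zeroLocus a I ↔ x.1 ∈ MvPolynomial.zeroLocus k I := by
  refine ⟨fun hx => hx x rfl, fun hx y hyx => ?_⟩
  obtain ⟨l, hl⟩ := wpsRel_of_mk_eq_mk hyx.symm
  rw [show y.1 = fun i => (l : k) ^ a i * x.1 i from funext hl]
  exact hI.pow_mul_mem_zeroLocus hx l

theorem zeroLocus_eq_empty_iff (hI : IsWeightedHomogeneousIdeal a I) :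
    zeroLocus a I = ∅ ↔ MvPolynomial.zeroLocus k I ⊆ {0} := by
  rw [Set.eq_empty_iff_forall_notMem]
  change (∀ p : Quot (wpsRel a), p ∉ zeroLocus a I) ↔ _
  rw [Quot.mk_surjective.forall]
  simp only [hI.mk_mem_zeroLocus_iff, Subtype.forall, Set.subset_def, Set.mem_singleton_iff]
  exact forall_congr' fun x => by rw [not_imp_comm, not_not]

end IsWeightedHomogeneousIdeal

end WeightedProjectiveSpace

theorem zeroLocus_empty_iff_irrelevant_subset_radical_general
    {k : Type*} [Field k] [IsAlgClosed k] {n : ℕ}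
    (a : Fin (n + 1) → ℕ)
    (I : Ideal (MvPolynomial (Fin (n + 1)) k))
    (hI : IsWeightedHomogeneousIdeal a I) :
    zeroLocus a I = ∅ ↔
      Ideal.span (Set.range (X : Fin (n + 1) → MvPolynomial (Fin (n + 1)) k))
        ≤ I.radical :=
  hI.zeroLocus_eq_empty_iff.trans (span_range_X_le_radical_iff I).symm

theorem zeroLocus_empty_iff_irrelevant_subset_radical
    {k : Type*} [Field k] [IsAlgClosed k] {n : ℕ}
    (a : Fin (n + 1) → ℕ) (ha : ∀ i, 0 < a i)
    (I : Ideal (MvPolynomial (Fin (n + 1)) k))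
    (hI : IsWeightedHomogeneousIdeal a I) :
    zeroLocus a I = ∅ ↔
      Ideal.span (Set.range (X : Fin (n + 1) → MvPolynomial (Fin (n + 1)) k))
        ≤ I.radical :=
  zeroLocus_empty_iff_irrelevant_subset_radical_general a I hI
end

section
/- A maximal weighted-homogeneous ideal (one that is relevant and maximal among relevant weighted-homogeneous ideals) of k_a[x_0,...,x_n] is a radical ideal. -/
open MvPolynomial

/-- A weighted-homogeneous ideal is *relevant* if it is strictly contained in the
irrelevant ideal `(x_0, …, x_n)` and has nonempty vanishing locus. -/
def IsRelevant {k : Type*} [Field k] {n : ℕ} (a : Fin (n + 1) → ℕ)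
    (I : Ideal (MvPolynomial (Fin (n + 1)) k)) : Prop :=
  I < Ideal.span (Set.range (X : Fin (n + 1) → MvPolynomial (Fin (n + 1)) k)) ∧
    zeroLocus a I ≠ ∅

/-! Passing to the radical preserves everything in sight: it is again weighted-homogeneous
(the radical of a homogeneous ideal of a graded ring is homogeneous), it has the same zero
locus, and it stays inside the irrelevant ideal because that ideal is prime. Hence `√I` is a
relevant weighted-homogeneous ideal containing `I`, and maximality forces `√I = I`. -/

namespace MvPolynomial

theorem idealOfVars_eq_ker_constantCoeff {σ R : Type*} [CommRing R] :
    idealOfVars σ R = RingHom.ker (constantCoeff : MvPolynomial σ R →+* R) := by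
  ext p
  rw [← pow_one (idealOfVars σ R), mem_pow_idealOfVars_iff', RingHom.mem_ker]
  simp [Finsupp.degree_eq_zero_iff, constantCoeff_eq]

instance isPrime_idealOfVars {σ R : Type*} [CommRing R] [IsDomain R] :
    (idealOfVars σ R).IsPrime := by
  rw [idealOfVars_eq_ker_constantCoeff]
  exact RingHom.ker_isPrime _

end MvPolynomial

section WeightedProjective

variable {k : Type*} [Field k] {n : ℕ} {a : Fin (n + 1) → ℕ}
  {I : Ideal (MvPolynomial (Fin (n + 1)) k)}

attribute [local instance] weightedGradedAlgebra

theorem isWeightedHomogeneousIdeal_iff :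
    IsWeightedHomogeneousIdeal a I ↔ I.IsHomogeneous (weightedHomogeneousSubmodule k a) := by
  constructor
  · rintro ⟨S, hS, rfl⟩
    refine Ideal.homogeneous_span _ S fun g hg => ?_
    obtain ⟨d, hd⟩ := hS g hg
    exact ⟨d, (mem_weightedHomogeneousSubmodule _ _ _ _).2 hd⟩
  · intro hI
    obtain ⟨T, rfl⟩ := (Ideal.IsHomogeneous.iff_exists _ _).1 hI
    refine ⟨_, ?_, rfl⟩
    rintro _ ⟨⟨g, d, hd⟩, -, rfl⟩
    exact ⟨d, (mem_weightedHomogeneousSubmodule _ _ _ _).1 hd⟩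

theorem IsWeightedHomogeneousIdeal.radical (hI : IsWeightedHomogeneousIdeal a I) :
    IsWeightedHomogeneousIdeal a I.radical :=
  isWeightedHomogeneousIdeal_iff.2 (isWeightedHomogeneousIdeal_iff.1 hI).radical

theorem zeroLocus_antitone : Antitone (zeroLocus (k := k) a) :=
  fun _ _ h _ hp x hx f hf => hp x hx f (h hf)

theorem zeroLocus_radical : zeroLocus a I.radical = zeroLocus a I := by
  refine (zeroLocus_antitone Ideal.le_radical).antisymm fun p hp x hx f ⟨r, hr⟩ => ?_
  have hpow : eval x.1 f ^ r = 0 := by rw [← map_pow]; exact hp x hx _ hr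
  exact eq_zero_of_pow_eq_zero hpow

theorem zeroLocus_idealOfVars : zeroLocus a (idealOfVars (Fin (n + 1)) k) = ∅ := by
  refine Set.eq_empty_of_forall_notMem fun p hp => ?_
  obtain ⟨x, hx⟩ := Quot.exists_rep p
  obtain ⟨i, hi⟩ := Function.ne_iff.1 x.2
  exact hi (by simpa using hp x hx (X i) (Ideal.subset_span ⟨i, rfl⟩))

theorem IsRelevant.radical (hI : IsRelevant a I) : IsRelevant a I.radical := by
  obtain ⟨hlt, hne⟩ := hI
  have hle : I.radical ≤ idealOfVars (Fin (n + 1)) k :=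
    Ideal.IsPrime.radical_le_iff inferInstance |>.2 hlt.le
  refine ⟨hle.lt_of_ne fun heq => ?_, by rwa [zeroLocus_radical]⟩
  rw [← zeroLocus_radical, heq, zeroLocus_idealOfVars] at hne
  exact hne rfl

end WeightedProjective

theorem maximal_weighted_homogeneous_ideal_is_radical_general
    {k : Type*} [Field k] {n : ℕ}
    (a : Fin (n + 1) → ℕ)
    (I : Ideal (MvPolynomial (Fin (n + 1)) k))
    (hwh : IsWeightedHomogeneousIdeal a I) (hrel : IsRelevant a I)
    (hmax : ∀ J : Ideal (MvPolynomial (Fin (n + 1)) k),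
      IsWeightedHomogeneousIdeal a J → I < J → ¬ IsRelevant a J) :
    I.IsRadical := by
  rcases (Ideal.le_radical (I := I)).eq_or_lt with h | h
  · exact Ideal.radical_eq_iff.1 h.symm
  · exact absurd hrel.radical (hmax _ hwh.radical h)

theorem maximal_weighted_homogeneous_ideal_is_radical
    {k : Type*} [Field k] [IsAlgClosed k] {n : ℕ}
    (a : Fin (n + 1) → ℕ) (ha : ∀ i, 0 < a i)
    (I : Ideal (MvPolynomial (Fin (n + 1)) k))
    (hwh : IsWeightedHomogeneousIdeal a I) (hrel : IsRelevant a I)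
    (hmax : ∀ J : Ideal (MvPolynomial (Fin (n + 1)) k),
      IsWeightedHomogeneousIdeal a J → I < J → ¬ IsRelevant a J) :
    I.IsRadical :=
  maximal_weighted_homogeneous_ideal_is_radical_general a I hwh hrel hmax
end

section
/- Let f ∈ k_a[x_0,x_1,x_2] be a sufficiently general weighted-homogeneous polynomial of degree d, and let p_i ∈ ℙ(a_0,a_1,a_2) be the i-th coordinate point (e.g. p_0 = |1:0:0|). Then p_i lies on the plane curve C_f = V(f) if and only if a_i does not divide d; moreover, if p_i ∈ C_f then p_i is not a singular point of f. -/
/-!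
Evaluating at the coordinate point `p_i` kills every monomial except the pure powers `x_i ^ n`,
and weighted homogeneity of degree `e` leaves at most one of them, `n = e / a_i`, present only
when `a_i ∣ e`. Applied to `f` this gives the first claim. Applied to `∂f/∂x_j`, which is
weighted homogeneous of degree `d - a_j`, the surviving coefficient is that of
`x_j * x_i ^ ((d - a_j) / a_i)` in `f`, which general position makes nonzero.
-/

open MvPolynomial

/-- A weighted-homogeneous polynomial of degree `d` is *sufficiently general* if:
`d ≥ 2`; every weight satisfies `a i ≤ d`; whenever `a i ∣ d` it has a nonzero
`x_i ^ (d / a_i)` term; and whenever `a i ∤ d` it has a nonzero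
`x_j * x_i ^ ((d - a_j) / a_i)` term for some `j ≠ i` with `a i ∣ (d - a j)`. -/
def SufficientlyGeneral {k : Type*} [Field k] (a : Fin 3 → ℕ) (d : ℕ)
    (f : MvPolynomial (Fin 3) k) : Prop :=
  2 ≤ d ∧ (∀ i, a i ≤ d) ∧
  (∀ i, a i ∣ d → coeff (Finsupp.single i (d / a i)) f ≠ 0) ∧
  (∀ i, ¬ a i ∣ d → ∃ j, j ≠ i ∧ a i ∣ (d - a j) ∧
    coeff (Finsupp.single j 1 + Finsupp.single i ((d - a j) / a i)) f ≠ 0)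

namespace MvPolynomial

variable {σ R : Type*} [DecidableEq σ] [CommSemiring R]

theorem eval_piSingle_one_monomial (i : σ) (m : σ →₀ ℕ) (c : R) :
    eval (Pi.single i 1) (monomial m c) = if m = Finsupp.single i (m i) then c else 0 := by
  rw [eval_monomial]
  split_ifs with hm
  · rw [hm]
    simp
  · obtain ⟨j, hji, hj⟩ : ∃ j, j ≠ i ∧ m j ≠ 0 := by
      by_contra! h
      exact hm (Finsupp.ext fun j => by
        by_cases hji : j = i
        · subst hji; simp
        · rw [h j hji, Finsupp.single_eq_of_ne' (Ne.symm hji)])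
    rw [Finsupp.prod, Finset.prod_eq_zero (Finsupp.mem_support_iff.mpr hj), mul_zero]
    rw [Pi.single_eq_of_ne hji, zero_pow hj]

theorem IsWeightedHomogeneous.eval_piSingle_one {w : σ → ℕ} {e : ℕ} {g : MvPolynomial σ R}
    (hg : g.IsWeightedHomogeneous w e) {i : σ} (hi : 0 < w i) :
    eval (Pi.single i 1) g = if w i ∣ e then coeff (Finsupp.single i (e / w i)) g else 0 := by
  have weight_pure : ∀ m ∈ g.support, m = Finsupp.single i (m i) → m i * w i = e := by
    intro m hm h
    rw [mem_support_iff, h] at hm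
    simpa [Finsupp.weight_single] using hg hm
  conv_lhs => rw [g.as_sum, map_sum]
  simp only [eval_piSingle_one_monomial]
  split_ifs with hdvd
  · rw [Finset.sum_eq_single (Finsupp.single i (e / w i)), Finsupp.single_eq_same, if_pos rfl]
    · exact fun m hm hne => if_neg fun h =>
        hne (by rw [h, ← weight_pure m hm h, Nat.mul_div_cancel _ hi])
    · exact fun ht => by rw [if_pos (by simp), notMem_support_iff.mp ht]
  · refine Finset.sum_eq_zero fun m hm => if_neg fun h => hdvd ⟨m i, ?_⟩
    rw [← weight_pure m hm h, mul_comm]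

end MvPolynomial

theorem coordinate_points_on_sufficiently_general_curve_general
    {k : Type*} [Field k]
    (a : Fin 3 → ℕ) (ha : ∀ i, 0 < a i)
    (f : MvPolynomial (Fin 3) k) (d : ℕ)
    (hf : f.IsWeightedHomogeneous a d) (hgen : SufficientlyGeneral a d f)
    (i : Fin 3) :
    (eval (Pi.single i (1 : k)) f = 0 ↔ ¬ a i ∣ d) ∧
    (eval (Pi.single i (1 : k)) f = 0 →
      ∃ j : Fin 3, eval (Pi.single i (1 : k)) (pderiv j f) ≠ 0) := by
  obtain ⟨-, hle, hpure, hmixed⟩ := hgen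
  have on_curve : eval (Pi.single i 1) f = 0 ↔ ¬ a i ∣ d := by
    rw [hf.eval_piSingle_one (ha i)]
    by_cases h : a i ∣ d <;> simp [h, hpure i]
  refine ⟨on_curve, fun h0 => ?_⟩
  obtain ⟨j, hji, hdvd, hcoeff⟩ := hmixed i (on_curve.mp h0)
  refine ⟨j, ?_⟩
  rw [(hf.pderiv (Nat.sub_add_cancel (hle j))).eval_piSingle_one (ha i), if_pos hdvd,
    coeff_pderiv, Finsupp.single_eq_of_ne hji, add_comm]
  simpa using hcoeff

theorem coordinate_points_on_sufficiently_general_curve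
    {k : Type*} [Field k] [IsAlgClosed k]
    (a : Fin 3 → ℕ) (ha : ∀ i, 0 < a i)
    (f : MvPolynomial (Fin 3) k) (d : ℕ)
    (hf : f.IsWeightedHomogeneous a d) (hgen : SufficientlyGeneral a d f)
    (i : Fin 3) :
    (eval (Pi.single i (1 : k)) f = 0 ↔ ¬ a i ∣ d) ∧
    (eval (Pi.single i (1 : k)) f = 0 →
      ∃ j : Fin 3, eval (Pi.single i (1 : k)) (pderiv j f) ≠ 0) :=
  coordinate_points_on_sufficiently_general_curve_general a ha f d hf hgen i
end
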